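/- (Feasibility robustness of the GCMPC, combining Lemma 3, Corollary 1, Lemma 4 and Theorem 3.) Let F ∈ ℝ^{n×n}, G ∈ ℝ^{n×m}, H ∈ ℝ^{n×p}, E₁ ∈ ℝ^{l×n}, E₂ ∈ ℝ^{l×m}, K ∈ ℝ^{m×n}, and set F̃ = F − G K and Ẽ₁ = E₁ − E₂ K. Define φ_k(x, v) = ‖Ẽ₁ x + E₂ v‖₂, let ρ_i ≥ 0 satisfy ‖Ẽ₁ F̃^i H z‖₂ ≤ ρ_i ‖z‖₂ for all z ∈ ℝᵖ and i ≥ 0, let c(k, i) = ρ_{k−i−1} + Σ_{j=0}^{k−i−2} ρ_j · c(k−j−1, i) for 0 ≤ i < k, and for a nominal trajectory x_{k+1} = F̃ x_k + G v_k set φ̄_k = φ_k(x_k, v_k) + Σ_{i=0}^{k−1} c(k, i) φ_i(x_i, v_i). Let A_k ∈ ℝ^{q×n}, B_k ∈ ℝ^{q×m}, c_k ∈ ℝ^q describe constraints, and Ã_k = A_k − B_k K. Assume that for some k ≥ 0 every row index 1 ≤ r ≤ q satisfies Ã_k^{(r)} x_k + B_k^{(r)} v_k + c_k^{(r)} + Σ_{j=0}^{k−1}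 ‖(F̃^{k−j−1} H)ᵀ (Ã_k^{(r)})ᵀ‖₂ · φ̄_j ≤ 0. Then for every disturbance sequence Δ_0, Δ_1, … in ℝ^{p×l} with ‖Δ_j z‖₂ ≤ ‖z‖₂ for all z, the uncertain trajectory defined by x̄_0 = x_0 and x̄_{j+1} = (F + H Δ_j E₁) x̄_j + (G + H Δ_j E₂) u_j with u_j = −K x̄_j + v_j satisfies A_k x̄_k + B_k u_k + c_k ≤ 0 componentwise. -/

import Mathlib

/-!
The deviation `e j = xbar j - x j` of the uncertain trajectory from the nominal one obeys
`e (j+1) = F̃ e j + H Δⱼ wⱼ` with `wⱼ = Ẽ₁ xbar j + E₂ v j`, so `e k = ∑_{j<k} F̃^(k-j-1) H Δⱼ wⱼ`.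
Writing `wⱼ = (Ẽ₁ x j + E₂ v j) + Ẽ₁ e j` gives `‖wⱼ‖ ≤ φⱼ + ∑_{i<j} ρ_(j-i-1) ‖wᵢ‖`. Since `c` is
the resolvent kernel of `ρ`, `φbar` solves the corresponding discrete Volterra equation, hence
dominates `‖wⱼ‖`. Cauchy–Schwarz then bounds `Ã_k^(r) e k` by the tightening term of the
hypothesis.
-/

open Matrix

/-- Euclidean norm of a real vector. -/
noncomputable def vecEnorm {d : ℕ} (x : Fin d → ℝ) : ℝ := Real.sqrt (x ⬝ᵥ x)

open Finset

section vecEnorm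

variable {d : ℕ}

lemma vecEnorm_eq_norm (x : Fin d → ℝ) : vecEnorm x = ‖WithLp.toLp 2 x‖ := by
  rw [norm_eq_sqrt_real_inner, EuclideanSpace.inner_toLp_toLp, star_trivial, dotProduct_comm]
  rfl

lemma vecEnorm_nonneg (x : Fin d → ℝ) : 0 ≤ vecEnorm x := Real.sqrt_nonneg _

lemma vecEnorm_add_le (x y : Fin d → ℝ) : vecEnorm (x + y) ≤ vecEnorm x + vecEnorm y := by
  simpa only [vecEnorm_eq_norm, WithLp.toLp_add] using norm_add_le _ _

lemma vecEnorm_sum_le {ι : Type*} (s : Finset ι) (f : ι → Fin d → ℝ) :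
    vecEnorm (∑ i ∈ s, f i) ≤ ∑ i ∈ s, vecEnorm (f i) := by
  simpa only [vecEnorm_eq_norm, WithLp.toLp_sum] using norm_sum_le s _

lemma dotProduct_le_vecEnorm_mul (x y : Fin d → ℝ) : x ⬝ᵥ y ≤ vecEnorm x * vecEnorm y := by
  simpa only [vecEnorm_eq_norm, EuclideanSpace.inner_toLp_toLp, star_trivial, dotProduct_comm]
    using real_inner_le_norm (WithLp.toLp 2 x) (WithLp.toLp 2 y)

lemma dotProduct_mulVec_le_vecEnorm_mul {e : ℕ} (a : Fin d → ℝ) (M : Matrix (Fin d) (Fin e) ℝ)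
    (z : Fin e → ℝ) : a ⬝ᵥ M *ᵥ z ≤ vecEnorm (Mᵀ *ᵥ a) * vecEnorm z := by
  rw [dotProduct_mulVec, ← mulVec_transpose]
  exact dotProduct_le_vecEnorm_mul _ _

end vecEnorm

lemma sum_range_sum_range_eq_sum_range_sum_range_sub {M : Type*} [AddCommMonoid M] (k : ℕ)
    (f : ℕ → ℕ → M) :
    ∑ i ∈ range k, ∑ b ∈ range i, f i b =
      ∑ b ∈ range k, ∑ j ∈ range (k - b - 1), f (k - j - 1) b := by
  rw [sum_comm' (t' := range k) (s' := fun b => Ioo b k)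
    (by intro i b; simp only [mem_range, mem_Ioo]; omega)]
  refine sum_congr rfl fun b _ => sum_nbij' (fun i => k - i - 1) (fun j => k - j - 1)
    ?_ ?_ ?_ ?_ ?_ <;> intro i hi <;> simp only [mem_range, mem_Ioo] at hi ⊢
  all_goals first | omega | (congr 1; omega)

lemma volterra_resolvent_eq {R : Type*} [Semiring R] {ρ : ℕ → R} {c : ℕ → ℕ → R}
    (hc : ∀ i k, i < k →
      c k i = ρ (k - i - 1) + ∑ j ∈ range (k - i - 1), ρ j * c (k - j - 1) i)
    {a y : ℕ → R} (hy : ∀ k, y k = a k + ∑ i ∈ range k, c k i * a i) (k : ℕ) :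
    y k = a k + ∑ i ∈ range k, ρ (k - i - 1) * y i := by
  simp only [hy, mul_add, mul_sum, sum_add_distrib]
  rw [sum_range_sum_range_eq_sum_range_sum_range_sub, ← sum_add_distrib]
  refine congrArg _ (sum_congr rfl fun i hi => ?_)
  rw [hc i k (mem_range.1 hi), add_mul, sum_mul]
  refine congrArg _ (sum_congr rfl fun j hj => ?_)
  rw [show k - (k - j - 1) - 1 = j by have := mem_range.1 hj; omega, mul_assoc]

lemma volterra_comparison {R : Type*} [Semiring R] [PartialOrder R] [IsOrderedRing R]
    {ρ a b y : ℕ → R} (hρ : ∀ i, 0 ≤ ρ i)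
    (hb : ∀ k, b k ≤ a k + ∑ i ∈ range k, ρ (k - i - 1) * b i)
    (hy : ∀ k, y k = a k + ∑ i ∈ range k, ρ (k - i - 1) * y i) (k : ℕ) : b k ≤ y k := by
  induction k using Nat.strong_induction_on with
  | _ k ih =>
    rw [hy]
    refine (hb k).trans (add_le_add_right (sum_le_sum fun i hi => ?_) _)
    exact mul_le_mul_of_nonneg_left (ih i (mem_range.1 hi)) (hρ _)

lemma Matrix.eq_sum_pow_mul_mulVec_of_succ {ι κ R : Type*} [Fintype ι] [DecidableEq ι]
    [Fintype κ] [Semiring R] (M : Matrix ι ι R) (N : Matrix ι κ R) {e : ℕ → ι → R}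
    {f : ℕ → κ → R} (h0 : e 0 = 0) (hsucc : ∀ j, e (j + 1) = M *ᵥ e j + N *ᵥ f j) (k : ℕ) :
    e k = ∑ i ∈ range k, (M ^ (k - i - 1) * N) *ᵥ f i := by
  induction k with
  | zero => simp [h0]
  | succ k ih =>
    rw [hsucc, ih, mulVec_sum, sum_range_succ,
      show k + 1 - k - 1 = 0 by omega, pow_zero, Matrix.one_mul]
    refine congrArg (· + N *ᵥ f k) (sum_congr rfl fun i hi => ?_)
    rw [mulVec_mulVec, ← Matrix.mul_assoc, ← pow_succ', show k - i - 1 + 1 = k + 1 - i - 1 by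
      have := mem_range.1 hi; omega]

lemma vecEnorm_mulVec_sum_pow_mul_mulVec_le {n p l : ℕ} {E : Matrix (Fin l) (Fin n) ℝ}
    {F : Matrix (Fin n) (Fin n) ℝ} {H : Matrix (Fin n) (Fin p) ℝ} {ρ : ℕ → ℝ}
    (hρ0 : ∀ i, 0 ≤ ρ i) (hρ : ∀ i z, vecEnorm ((E * F ^ i * H) *ᵥ z) ≤ ρ i * vecEnorm z)
    {Δ : ℕ → Matrix (Fin p) (Fin l) ℝ} (hΔ : ∀ j z, vecEnorm (Δ j *ᵥ z) ≤ vecEnorm z)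
    (w : ℕ → Fin l → ℝ) (k : ℕ) :
    vecEnorm (E *ᵥ ∑ i ∈ range k, (F ^ (k - i - 1) * H) *ᵥ (Δ i *ᵥ w i)) ≤
      ∑ i ∈ range k, ρ (k - i - 1) * vecEnorm (w i) := by
  rw [mulVec_sum]
  refine (vecEnorm_sum_le _ _).trans (sum_le_sum fun i _ => ?_)
  rw [mulVec_mulVec, ← Matrix.mul_assoc]
  exact (hρ _ _).trans (mul_le_mul_of_nonneg_left (hΔ i _) (hρ0 _))

section Feedback

variable {R : Type*} [Ring R] {ι κ μ ν π : Type*} [Fintype κ] [Fintype μ] [Fintype ν]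
  [Fintype π]

lemma mulVec_add_mulVec_feedback (A : Matrix ι κ R) (B : Matrix ι μ R) (K : Matrix μ κ R)
    (x : κ → R) (v : μ → R) :
    A *ᵥ x + B *ᵥ (-(K *ᵥ x) + v) = (A - B * K) *ᵥ x + B *ᵥ v := by
  rw [mulVec_add, mulVec_neg, sub_mulVec, mulVec_mulVec, sub_eq_add_neg, add_assoc]

lemma uncertain_feedback_step (F : Matrix κ κ R) (G : Matrix κ μ R) (H : Matrix κ π R)
    (Δ : Matrix π ν R) (E₁ : Matrix ν κ R) (E₂ : Matrix ν μ R) (K : Matrix μ κ R)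
    (x : κ → R) (v : μ → R) :
    (F + H * Δ * E₁) *ᵥ x + (G + H * Δ * E₂) *ᵥ (-(K *ᵥ x) + v) =
      (F - G * K) *ᵥ x + G *ᵥ v + H *ᵥ (Δ *ᵥ ((E₁ - E₂ * K) *ᵥ x + E₂ *ᵥ v)) := by
  rw [mulVec_add_mulVec_feedback]
  simp only [add_mulVec, sub_mulVec, mulVec_add, mulVec_sub, ← mulVec_mulVec]
  abel

end Feedback

theorem stmt_13 {n m p l q : ℕ}
    (F : Matrix (Fin n) (Fin n) ℝ) (G : Matrix (Fin n) (Fin m) ℝ)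
    (H : Matrix (Fin n) (Fin p) ℝ)
    (E₁ : Matrix (Fin l) (Fin n) ℝ) (E₂ : Matrix (Fin l) (Fin m) ℝ)
    (K : Matrix (Fin m) (Fin n) ℝ)
    (Ftil : Matrix (Fin n) (Fin n) ℝ) (hFtil : Ftil = F - G * K)
    (Etil₁ : Matrix (Fin l) (Fin n) ℝ) (hEtil₁ : Etil₁ = E₁ - E₂ * K)
    (φ : (Fin n → ℝ) → (Fin m → ℝ) → ℝ)
    (hφ : ∀ x v, φ x v = vecEnorm (Etil₁.mulVec x + E₂.mulVec v))
    (ρ : ℕ → ℝ) (hρ0 : ∀ i, 0 ≤ ρ i)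
    (hρ : ∀ (i : ℕ) (z : Fin p → ℝ),
      vecEnorm ((Etil₁ * Ftil ^ i * H).mulVec z) ≤ ρ i * vecEnorm z)
    (c : ℕ → ℕ → ℝ)
    (hc : ∀ i k, i < k →
      c k i = ρ (k - i - 1) + ∑ j ∈ Finset.range (k - i - 1), ρ j * c (k - j - 1) i)
    (x : ℕ → Fin n → ℝ) (v : ℕ → Fin m → ℝ)
    (hx : ∀ j, x (j + 1) = Ftil.mulVec (x j) + G.mulVec (v j))
    (φbar : ℕ → ℝ)
    (hφbar : ∀ k, φbar k = φ (x k) (v k) + ∑ i ∈ Finset.range k, c k i * φ (x i) (v i))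
    (A : Matrix (Fin q) (Fin n) ℝ) (B : Matrix (Fin q) (Fin m) ℝ) (cvec : Fin q → ℝ)
    (Atil : Matrix (Fin q) (Fin n) ℝ) (hAtil : Atil = A - B * K)
    (k : ℕ)
    (hrob : ∀ r : Fin q,
      Atil r ⬝ᵥ x k + B r ⬝ᵥ v k + cvec r
        + ∑ j ∈ Finset.range k,
            vecEnorm ((Ftil ^ (k - j - 1) * H)ᵀ.mulVec (Atil r)) * φbar j
      ≤ 0) :
    ∀ Δ : ℕ → Matrix (Fin p) (Fin l) ℝ,
      (∀ j, ∀ z : Fin l → ℝ, vecEnorm ((Δ j).mulVec z) ≤ vecEnorm z) →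
      ∀ xbar : ℕ → Fin n → ℝ, ∀ u : ℕ → Fin m → ℝ,
        xbar 0 = x 0 →
        (∀ j, u j = -K.mulVec (xbar j) + v j) →
        (∀ j, xbar (j + 1)
          = (F + H * Δ j * E₁).mulVec (xbar j) + (G + H * Δ j * E₂).mulVec (u j)) →
        ∀ r : Fin q, A r ⬝ᵥ xbar k + B r ⬝ᵥ u k + cvec r ≤ 0 := by
  intro Δ hΔ xbar u h0 hu hstep r
  set w : ℕ → Fin l → ℝ := fun j => Etil₁ *ᵥ xbar j + E₂ *ᵥ v j
  have herr : ∀ j, xbar (j + 1) - x (j + 1) = Ftil *ᵥ (xbar j - x j) + H *ᵥ (Δ j *ᵥ w j) := by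
    intro j
    rw [hstep, hu, hx, uncertain_feedback_step, ← hFtil, ← hEtil₁, mulVec_sub]
    abel
  have he : ∀ j, xbar j - x j = ∑ i ∈ range j, (Ftil ^ (j - i - 1) * H) *ᵥ (Δ i *ᵥ w i) :=
    Ftil.eq_sum_pow_mul_mulVec_of_succ H (e := fun j => xbar j - x j) (by rw [h0, sub_self]) herr
  have hw_le : ∀ j, vecEnorm (w j) ≤ φbar j := by
    refine volterra_comparison hρ0 (b := fun j => vecEnorm (w j)) (fun j => ?_)
      (volterra_resolvent_eq hc hφbar)
    have hwj : w j = (Etil₁ *ᵥ x j + E₂ *ᵥ v j) + Etil₁ *ᵥ (xbar j - x j) := by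
      simp only [w, mulVec_sub]
      abel
    rw [hwj, hφ, he]
    exact (vecEnorm_add_le _ _).trans
      (add_le_add_right (vecEnorm_mulVec_sum_pow_mul_mulVec_le hρ0 hρ hΔ w j) _)
  have hrow : A r ⬝ᵥ xbar k + B r ⬝ᵥ u k + cvec r =
      Atil r ⬝ᵥ x k + B r ⬝ᵥ v k + cvec r + Atil r ⬝ᵥ (xbar k - x k) := by
    have hfeedback := congrFun (mulVec_add_mulVec_feedback A B K (xbar k) (v k)) r
    change A r ⬝ᵥ _ + B r ⬝ᵥ _ = (A - B * K) r ⬝ᵥ _ + B r ⬝ᵥ _ at hfeedback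
    rw [hu, hAtil, dotProduct_sub]
    linarith
  have herr_le : Atil r ⬝ᵥ (xbar k - x k) ≤
      ∑ j ∈ range k, vecEnorm ((Ftil ^ (k - j - 1) * H)ᵀ *ᵥ Atil r) * φbar j := by
    rw [he, dotProduct_sum]
    gcongr with j
    exact (dotProduct_mulVec_le_vecEnorm_mul _ _ _).trans
      (mul_le_mul_of_nonneg_left ((hΔ j _).trans (hw_le j)) (vecEnorm_nonneg _))
  linarith [hrob r]
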